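/- Let T = k[x_0, x_1, y_0, y_1, y_2] be the Cox ring of P^1 × P^2 and let I = (y_0^2, x_0 y_0, x_0 y_1^3) ⊆ T, whose Hilbert polynomial is P_I(t_1,t_2) = 3t_1 + 2t_2 + 1. Then there is no point (d_1,d_2) ∈ ℕ^2 with I generated in degrees ≤ (d_1,d_2) such that both H_I(d_1+1, d_2) = H_I(d_1,d_2)^{⟨d_1⟩_1} and H_I(d_1, d_2+1) = H_I(d_1,d_2)^{⟨d_2⟩_2} hold. -/

import Mathlib

open MvPolynomial

namespace Gotzmann

/-- Variable index set for the Cox ring of `P^{n 0} × ... × P^{n (s-1)}`: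
the variable `x_{i,j}` is `⟨i, j⟩`. -/
abbrev PPVar (s : ℕ) (n : Fin s → ℕ) : Type := Σ i : Fin s, Fin (n i + 1)

/-- The multidegree of the variable `x_{i,j}` is the standard basis vector `e_i ∈ ℤ^s` (here
realised in `ℕ^s`). -/
def ppw (s : ℕ) (n : Fin s → ℕ) : PPVar s n → (Fin s → ℕ) :=
  fun v => Pi.single v.1 1

/-- Weighted degree of an exponent vector. -/
def wdeg {σ M : Type*} [AddCommMonoid M] (w : σ → M) (u : σ →₀ ℕ) : M :=
  u.sum fun v e => e • w v

/-- Multigraded Hilbert function of `S/I` in degree `b`: the dimension of the image of the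
degree-`b` part of `S` in `S/I`. -/
noncomputable def hilb (k : Type*) [Field k] {σ M : Type*} [AddCommMonoid M]
    (w : σ → M) (I : Ideal (MvPolynomial σ k)) (b : M) : ℕ :=
  Module.finrank k ((weightedHomogeneousSubmodule k w b).map
    (Ideal.Quotient.mkₐ k I).toLinearMap)

/-- An ideal homogeneous with respect to the grading by `w`. -/
def IsHomog {k : Type*} [Field k] {σ M : Type*} [AddCommMonoid M]
    (w : σ → M) (I : Ideal (MvPolynomial σ k)) : Prop :=
  ∃ G : Set (MvPolynomial σ k),
    (∀ f ∈ G, ∃ d : M, f.IsWeightedHomogeneous w d) ∧ I = Ideal.span G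

/-- A monomial ideal. -/
def IsMonomialIdeal {k : Type*} [Field k] {σ : Type*} (I : Ideal (MvPolynomial σ k)) : Prop :=
  ∃ A : Set (σ →₀ ℕ), I = Ideal.span ((fun u => (monomial u (1 : k))) '' A)

/-- Generated in degrees componentwise at most `a`. -/
def GenInDegLE {k : Type*} [Field k] {σ : Type*} {s : ℕ}
    (w : σ → (Fin s → ℕ)) (I : Ideal (MvPolynomial σ k)) (a : Fin s → ℕ) : Prop :=
  ∃ G : Set (MvPolynomial σ k), I = Ideal.span G ∧
    ∀ f ∈ G, ∃ d : Fin s → ℕ, f.IsWeightedHomogeneous w d ∧ ∀ i, d i ≤ a i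

/-- Generated in degrees at most `a` for the standard grading. -/
def GenInDegLE1 {k : Type*} [Field k] {σ : Type*}
    (I : Ideal (MvPolynomial σ k)) (a : ℕ) : Prop :=
  ∃ G : Set (MvPolynomial σ k), I = Ideal.span G ∧
    ∀ f ∈ G, ∃ d : ℕ, f.IsWeightedHomogeneous (fun _ : σ => (1 : ℕ)) d ∧ d ≤ a

/-- `P` is the (multigraded) Hilbert polynomial of `I`: it agrees with the Hilbert function
for all multidegrees sufficiently deep in `ℕ^s`. -/
def IsHilbPoly (k : Type*) [Field k] {σ : Type*} {s : ℕ}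
    (w : σ → (Fin s → ℕ)) (I : Ideal (MvPolynomial σ k))
    (P : MvPolynomial (Fin s) ℚ) : Prop :=
  ∃ N : ℕ, ∀ b : Fin s → ℕ, (∀ i, N ≤ b i) →
    eval (fun i => (b i : ℚ)) P = (hilb k w I b : ℚ)

/-- `P` is the Hilbert polynomial of the standard-graded ideal `I`. -/
def IsHilbPoly1 (k : Type*) [Field k] {σ : Type*}
    (I : Ideal (MvPolynomial σ k)) (P : Polynomial ℚ) : Prop :=
  ∃ N : ℕ, ∀ b : ℕ, N ≤ b →
    P.eval (b : ℚ) = (hilb k (fun _ : σ => (1 : ℕ)) I b : ℚ)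

/-- Hilbert polynomial for a `ℤ^s`-graded ring, agreement deep in `ℕ^s ⊆ ℤ^s`. -/
def IsHilbPolyZ (k : Type*) [Field k] {σ : Type*} {s : ℕ}
    (w : σ → (Fin s → ℤ)) (I : Ideal (MvPolynomial σ k))
    (P : MvPolynomial (Fin s) ℚ) : Prop :=
  ∃ N : ℕ, ∀ b : Fin s → ℕ, (∀ i, N ≤ b i) →
    eval (fun i => (b i : ℚ)) P = (hilb k w I (fun i => (b i : ℤ)) : ℚ)

/-- A strongly multistable (monomial) ideal. -/
def StronglyMultistable {k : Type*} [Field k] {s : ℕ} {n : Fin s → ℕ}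
    (I : Ideal (MvPolynomial (PPVar s n) k)) : Prop :=
  IsMonomialIdeal I ∧
    ∀ u : PPVar s n →₀ ℕ, (monomial u (1 : k)) ∈ I →
      ∀ (i : Fin s) (j j' : Fin (n i + 1)), j' < j → u ⟨i, j⟩ ≠ 0 →
        (monomial (u - Finsupp.single ⟨i, j⟩ 1 + Finsupp.single ⟨i, j'⟩ 1) (1 : k)) ∈ I

/-- A strongly multistable set of exponent vectors. -/
def StronglyMultistableSet {s : ℕ} {n : Fin s → ℕ} (M : Set (PPVar s n →₀ ℕ)) : Prop :=
  ∀ u ∈ M, ∀ (i : Fin s) (j j' : Fin (n i + 1)), j' < j → u ⟨i, j⟩ ≠ 0 →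
    u - Finsupp.single ⟨i, j⟩ 1 + Finsupp.single ⟨i, j'⟩ 1 ∈ M

/-- The part of an exponent vector supported on block `i`. -/
noncomputable def blockPart {s : ℕ} {n : Fin s → ℕ} (i : Fin s) (u : PPVar s n →₀ ℕ) :
    PPVar s n →₀ ℕ := u.filter fun v => v.1 = i

/-- The part of an exponent vector supported off block `i`. -/
noncomputable def offBlock {s : ℕ} {n : Fin s → ℕ} (i : Fin s) (u : PPVar s n →₀ ℕ) :
    PPVar s n →₀ ℕ := u.filter fun v => v.1 ≠ i

/-- Exponent vectors supported on block `i` of total degree `d`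
(monomials of degree `d·e_i`). -/
def blockMon {s : ℕ} {n : Fin s → ℕ} (i : Fin s) (d : ℕ) : Set (PPVar s n →₀ ℕ) :=
  {p | (∀ v ∈ p.support, v.1 = i) ∧ p.sum (fun _ e => e) = d}

/-- `blockLt i u v` : the block-`i` monomial of `v` is strictly larger than that of `u` in the
lexicographic order with `x_{i,0} ≻ x_{i,1} ≻ ⋯`. -/
def blockLt {s : ℕ} {n : Fin s → ℕ} (i : Fin s) (u v : PPVar s n →₀ ℕ) : Prop :=
  Pi.Lex (· < ·) (fun {_} => (· < ·)) (fun j => u ⟨i, j⟩) (fun j => v ⟨i, j⟩)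

/-- `M` is an `x_i`-lex set: replacing the block-`i` part of a member by any lexicographically
larger monomial of the same degree stays in `M`. -/
def IsXiLex {s : ℕ} {n : Fin s → ℕ} (i : Fin s) (M : Set (PPVar s n →₀ ℕ)) : Prop :=
  ∀ u ∈ M, ∀ p' : PPVar s n →₀ ℕ,
    (∀ v ∈ p'.support, v.1 = i) →
    p'.sum (fun _ e => e) = (blockPart i u).sum (fun _ e => e) →
    blockLt i (blockPart i u) p' →
    offBlock i u + p' ∈ M

/-- The initial lexsegment of size `c` among block-`i` monomials of degree `d`. -/
noncomputable def lexSeg {s : ℕ} {n : Fin s → ℕ} (i : Fin s) (d c : ℕ) :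
    Set (PPVar s n →₀ ℕ) :=
  {p ∈ blockMon i d | (blockMon (n := n) i d ∩ {p' | blockLt i p p'}).ncard < c}

/-- The operation `M ↦ M^{x_i lex}`: in each fibre over a fixed off-block-`i` part, replace the
set of block-`i` parts by the initial lexsegment of the same cardinality. -/
noncomputable def xiLexify {s : ℕ} {n : Fin s → ℕ} (i : Fin s)
    (M : Set (PPVar s n →₀ ℕ)) : Set (PPVar s n →₀ ℕ) :=
  {w | ∃ u ∈ M, offBlock i w = offBlock i u ∧
        blockPart i w ∈ lexSeg i ((blockPart i u).sum fun _ e => e)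
          ({p | p ∈ blockMon i ((blockPart i u).sum fun _ e => e) ∧
              offBlock i u + p ∈ M}).ncard}

/-- Successively apply `M ↦ M^{x_i lex}` for the first `t` blocks. -/
noncomputable def lexifyUpTo {s : ℕ} {n : Fin s → ℕ} (M : Set (PPVar s n →₀ ℕ)) :
    ℕ → Set (PPVar s n →₀ ℕ)
  | 0 => M
  | t + 1 => if h : t < s then xiLexify ⟨t, h⟩ (lexifyUpTo M t) else lexifyUpTo M t

/-- `M^{multilex} = M^{x_1 lex ⋯ x_s lex}`. -/
noncomputable def multilexify {s : ℕ} {n : Fin s → ℕ} (M : Set (PPVar s n →₀ ℕ)) :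
    Set (PPVar s n →₀ ℕ) := lexifyUpTo M s

/-- The exponent vectors of the monomials of `I` of multidegree `a`. -/
def monomialsOf {k : Type*} [Field k] {s : ℕ} {n : Fin s → ℕ}
    (I : Ideal (MvPolynomial (PPVar s n) k)) (a : Fin s → ℕ) : Set (PPVar s n →₀ ℕ) :=
  {u | wdeg (ppw s n) u = a ∧ (monomial u (1 : k)) ∈ I}

/-- A multilex (monomial) ideal. -/
def IsMultilexIdeal {k : Type*} [Field k] {s : ℕ} {n : Fin s → ℕ}
    (I : Ideal (MvPolynomial (PPVar s n) k)) : Prop :=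
  IsMonomialIdeal I ∧ ∀ (a : Fin s → ℕ) (i : Fin s), IsXiLex i (monomialsOf I a)

/-- `κ` encodes the `d`-th Macaulay representation of `α`:
`α = C(κ(d),d) + ⋯ + C(κ(1),1)` with `κ(d) > ⋯ > κ(1) ≥ 0`; here `κ j` is the paper's
`κ(j+1)`. -/
def IsMacaulayRep (d α : ℕ) (κ : Fin d → ℕ) : Prop :=
  StrictMono κ ∧ α = ∑ j : Fin d, Nat.choose (κ j) ((j : ℕ) + 1)

/-- The Macaulay bound `α^{⟨d⟩}`. -/
noncomputable def macaulayBound (d α : ℕ) : ℕ :=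
  letI := Classical.propDecidable (∃ κ : Fin d → ℕ, IsMacaulayRep d α κ)
  if h : ∃ κ : Fin d → ℕ, IsMacaulayRep d α κ
  then ∑ j : Fin d, Nat.choose (h.choose j + 1) ((j : ℕ) + 2)
  else 0

/-- Maximal growth of a Hilbert function in one direction: with
`H u = C(nv+u, nv)·q(u) + r(u)` the Euclidean division, `H (u+1) = C(nv+u+1,nv)·q(u) + r(u)^⟨u⟩`. -/
def growthStep (nv : ℕ) (H : ℕ → ℕ) (u : ℕ) : Prop :=
  H (u + 1) =
    (nv + u + 1).choose nv * (H u / (nv + u).choose nv)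
      + macaulayBound u (H u % (nv + u).choose nv)

/-- Hilbert polynomial for a `ℤ^s`-graded Cox ring, with agreement sufficiently far into the nef
cone, parameterised by nef classes `c i`. -/
def IsHilbPolyNef (k : Type*) [Field k] {σ : Type*} {s : ℕ}
    (w : σ → (Fin s → ℤ)) (c : Fin s → (Fin s → ℤ))
    (I : Ideal (MvPolynomial σ k)) (P : MvPolynomial (Fin s) ℚ) : Prop :=
  ∃ N : ℕ, ∀ b : Fin s → ℕ, (∀ i, N ≤ b i) →
    eval (fun j => ((∑ i, (b i : ℤ) * c i j : ℤ) : ℚ)) P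
      = (hilb k w I (fun j => ∑ i, (b i : ℤ) * c i j) : ℚ)

/-- The `ℤ²`-grading of the Cox ring of Kleinschmidt's Picard-rank-2 toric variety `X_d(a)`:
`deg z_i = (-a_i, 1)` for `1 ≤ i ≤ s`, `deg z_{s+1} = (0,1)`, `deg z_i = (1,0)` otherwise
(indices here are `0`-based). -/
def kw (d s : ℕ) (a : Fin s → ℕ) : Fin (d + 2) → (Fin 2 → ℤ) :=
  fun i => if h : (i : ℕ) < s then ![-(a ⟨i, h⟩ : ℤ), 1]
    else if (i : ℕ) = s then ![0, 1] else ![1, 0]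

/-- The bigrading of `T = k[x₀,x₁,y₀,y₁,y₂] = Cox(P¹ × P²)`. -/
def w18 : Fin 2 ⊕ Fin 3 → (Fin 2 → ℕ) :=
  Sum.elim (fun _ => ![1, 0]) (fun _ => ![0, 1])

/-!
Counting standard monomials, the Hilbert function of `T/I` is
`H(d₁, d₂) = 2d₂ + 1 + d₁ · min 3 (d₂ + 1)`. In the `ℙ¹` direction maximal growth reads
`H(d₁+1) = H(d₁) + ⌊H(d₁)/(d₁+1)⌋`, which for `d₂ ≥ 2` forces `d₁ ≥ 2d₂ - 2`. In the `ℙ²`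
direction the increment is `2 < d₂ + 2`, so the quotient of the division by `C(d₂+2, 2)` must
vanish and maximal growth says `H^⟨d₂⟩ = H + 2`. For the Macaulay representation
`α = ∑ C(κⱼ, j+1)` one has `α^⟨d⟩ - α = ∑ C(κⱼ, j+2)`, and the termwise bound
`C(κ, j+1) ≤ 1 + (j+1)·C(κ, j+2)` gives `α ≤ d(e+1)` whenever `α^⟨d⟩ ≤ α + e`; hence
`d₂ ≥ 3d₁ + 1`, incompatible with `d₁ ≥ 2d₂ - 2`. For `d₂ = 1` maximal growth in the `ℙ²`
direction fails modulo `3`, and for `d₂ = 0` it forces `d₁ = 0`, a degree in which `I` is not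
generated.
-/

theorem _root_.Nat.choose_succ_le_one_add_mul_choose_succ (n k : ℕ) :
    n.choose (k + 1) ≤ 1 + (k + 1) * n.choose (k + 2) := by
  obtain hn | rfl | hn : n ≤ k + 1 ∨ n = k + 2 ∨ k + 3 ≤ n := by omega
  · rcases hn.lt_or_eq with hn | rfl
    · simp [Nat.choose_eq_zero_of_lt hn]
    · simp
  · simp [Nat.choose_succ_self_right]
  · have hrec := Nat.choose_succ_right_eq n (k + 1)
    have hn' : 2 ≤ n - (k + 1) := by omega
    nlinarith [Nat.mul_le_mul_left (n.choose (k + 1)) hn']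

theorem _root_.StrictMono.apply_add_sub_le_of_fin {d : ℕ} {κ : Fin d → ℕ} (hκ : StrictMono κ)
    {i j : Fin d} (hij : i ≤ j) : κ i + (j - i : ℕ) ≤ κ j := by
  obtain ⟨j, hj⟩ := j
  replace hij : (i : ℕ) ≤ j := hij
  induction j, hij using Nat.le_induction with
  | base => simp
  | succ j hij ih =>
    have h1 := ih (by omega)
    have h2 := hκ (Fin.mk_lt_mk.mpr j.lt_succ_self : (⟨j, by omega⟩ : Fin d) < ⟨j + 1, hj⟩)
    simp only at h1 ⊢
    omega

theorem _root_.StrictMono.fin_snoc {d m : ℕ} {κ : Fin d → ℕ} (hκ : StrictMono κ)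
    (hm : ∀ j, κ j < m) : StrictMono (Fin.snoc κ m : Fin (d + 1) → ℕ) := by
  intro a b hab
  induction b using Fin.lastCases with
  | last =>
    induction a using Fin.lastCases with
    | last => exact absurd hab (lt_irrefl _)
    | cast a => simpa using hm a
  | cast b =>
    induction a using Fin.lastCases with
    | last => exact absurd hab (not_lt.mpr (Fin.le_last _))
    | cast a => simpa using hκ (Fin.castSucc_lt_castSucc_iff.mp hab)

theorem exists_choose_le_lt_choose {k α N : ℕ} (h : α < N.choose (k + 1)) :
    ∃ m < N, m.choose (k + 1) ≤ α ∧ α < (m + 1).choose (k + 1) := by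
  classical
  have hex : ∃ n : ℕ, α < n.choose (k + 1) := ⟨N, h⟩
  have hpos : Nat.find hex ≠ 0 := fun h0 => by simpa [h0] using Nat.find_spec hex
  refine ⟨Nat.find hex - 1, by have := Nat.find_min' hex h; omega, ?_, ?_⟩
  · exact not_lt.mp (Nat.find_min hex (by omega))
  · simpa [Nat.sub_add_cancel (Nat.pos_of_ne_zero hpos)] using Nat.find_spec hex

theorem exists_isMacaulayRep_lt {d α N : ℕ} (h : α < N.choose d) :
    ∃ κ, IsMacaulayRep d α κ ∧ ∀ j, κ j < N := by
  induction d generalizing α N with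
  | zero => exact ⟨Fin.elim0, ⟨fun a => a.elim0, by simpa using h⟩, fun j => j.elim0⟩
  | succ d ih =>
    -- greedy step: the top binomial `C(m, d+1)` is the largest one not exceeding `α`
    obtain ⟨m, hmN, hle, hlt⟩ := exists_choose_le_lt_choose h
    rw [Nat.choose_succ_succ'] at hlt
    obtain ⟨κ, ⟨hmono, hsum⟩, hκm⟩ := ih (α := α - m.choose (d + 1)) (N := m) (by omega)
    refine ⟨Fin.snoc κ m, ⟨hmono.fin_snoc hκm, ?_⟩,
      Fin.lastCases (by simpa using hmN) (by simpa using fun j => (hκm j).trans hmN)⟩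
    rw [Fin.sum_univ_castSucc]
    simp only [Fin.snoc_castSucc, Fin.snoc_last, Fin.val_last, Fin.val_castSucc, ← hsum]
    omega

theorem exists_isMacaulayRep_of_lt_choose {d α N : ℕ} (h : α < N.choose d) :
    ∃ κ, IsMacaulayRep d α κ :=
  (exists_isMacaulayRep_lt h).imp fun _ => And.left

theorem exists_macaulayBound_eq_add_sum {d α : ℕ} (h : ∃ κ, IsMacaulayRep d α κ) :
    ∃ κ : Fin d → ℕ, IsMacaulayRep d α κ ∧
      macaulayBound d α = α + ∑ j : Fin d, (κ j).choose (j + 2) := by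
  refine ⟨h.choose, h.choose_spec, ?_⟩
  have hpascal : ∀ j : Fin d, (h.choose j + 1).choose (j + 2)
      = (h.choose j).choose (j + 1) + (h.choose j).choose (j + 2) :=
    fun j => Nat.choose_succ_succ' _ _
  rw [macaulayBound, dif_pos h]
  simp only [hpascal, Finset.sum_add_distrib, ← h.choose_spec.2]

theorem le_macaulayBound {d α : ℕ} (h : ∃ κ, IsMacaulayRep d α κ) : α ≤ macaulayBound d α := by
  obtain ⟨κ, -, hbd⟩ := exists_macaulayBound_eq_add_sum h
  omega

theorem macaulayBound_zero (α : ℕ) : macaulayBound 0 α = 0 := by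
  unfold macaulayBound
  split <;> simp

theorem macaulayBound_one (α : ℕ) : macaulayBound 1 α = (α + 1).choose 2 := by
  obtain ⟨κ, ⟨-, hsum⟩, hbd⟩ := exists_macaulayBound_eq_add_sum
    (exists_isMacaulayRep_of_lt_choose (d := 1) (α := α) (N := α + 1) (by simp))
  simp only [Fin.sum_univ_one, Fin.val_zero, zero_add, Nat.choose_one_right] at hsum hbd
  rw [hbd, hsum, Nat.choose_succ_succ', Nat.choose_one_right]

theorem macaulayBound_of_le {d α : ℕ} (h : α ≤ d) : macaulayBound d α = α := by
  obtain ⟨κ, ⟨hmono, hsum⟩, hbd⟩ := exists_macaulayBound_eq_add_sum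
    (exists_isMacaulayRep_of_lt_choose (d := d) (α := α) (N := d + 1)
      (by rw [Nat.choose_succ_self_right]; omega))
  suffices ∀ j : Fin d, κ j < j + 2 by
    simp [hbd, Finset.sum_eq_zero fun j _ => Nat.choose_eq_zero_of_lt (this j)]
  intro j
  by_contra! hj
  have hd : 0 < d := j.pos
  set L : Fin d := ⟨d - 1, by omega⟩
  have hL : d + 1 ≤ κ L := by
    have hLval : (L : ℕ) = d - 1 := rfl
    have := hmono.apply_add_sub_le_of_fin (Fin.le_def.mpr (by omega) : j ≤ L)
    omega
  have hLα : (κ L).choose d ≤ α := by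
    rw [hsum]
    simpa [L, Nat.sub_add_cancel hd] using
      Finset.single_le_sum (f := fun j : Fin d => (κ j).choose (j + 1))
        (fun _ _ => Nat.zero_le _) (Finset.mem_univ L)
  have := Nat.choose_le_choose d hL
  rw [Nat.choose_succ_self_right] at this
  omega

theorem le_mul_of_macaulayBound_le {d α e : ℕ} (h : ∃ κ, IsMacaulayRep d α κ)
    (he : macaulayBound d α ≤ α + e) : α ≤ d * (e + 1) := by
  obtain ⟨κ, ⟨-, hsum⟩, hbd⟩ := exists_macaulayBound_eq_add_sum h
  calc α = ∑ j : Fin d, (κ j).choose (j + 1) := hsum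
    _ ≤ ∑ j : Fin d, (1 + d * (κ j).choose (j + 2)) := Finset.sum_le_sum fun j _ =>
        (Nat.choose_succ_le_one_add_mul_choose_succ _ _).trans (by gcongr; exact j.isLt)
    _ = d * (∑ j : Fin d, (κ j).choose (j + 2) + 1) := by
        rw [Finset.sum_add_distrib, ← Finset.mul_sum]; simp; ring
    _ ≤ d * (e + 1) := by gcongr; omega

section GrowthStep

variable {nv u : ℕ} {H : ℕ → ℕ}

theorem growthStep_zero_iff : growthStep nv H 0 ↔ H 1 = (nv + 1) * H 0 := by
  simp [growthStep, Nat.choose_succ_self_right, macaulayBound_zero]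

theorem growthStep_one_iff : growthStep 1 H u ↔ H (u + 1) = H u + H u / (u + 1) := by
  have hr : H u % (u + 1) ≤ u := Nat.lt_succ_iff.mp (Nat.mod_lt _ u.succ_pos)
  have hdiv := Nat.div_add_mod (H u) (u + 1)
  simp only [growthStep, Nat.choose_one_right, add_comm 1 u, macaulayBound_of_le hr,
    add_mul (u + 1) 1, one_mul]
  omega

theorem growthStep_at_one_iff :
    growthStep nv H 1 ↔
      H 2 = (nv + 2).choose nv * (H 1 / (nv + 1)) + (H 1 % (nv + 1) + 1).choose 2 := by
  simp [growthStep, Nat.choose_succ_self_right, macaulayBound_one]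

theorem growthStep_succ_of_lt (hg : growthStep (nv + 1) H u)
    (hlt : H (u + 1) < H u + (nv + 1 + u).choose nv) :
    H u < (nv + 1 + u).choose (nv + 1) ∧ H (u + 1) = macaulayBound u (H u) := by
  unfold growthStep at hg
  rw [Nat.choose_succ_succ' (nv + 1 + u)] at hg
  set c := (nv + 1 + u).choose (nv + 1)
  have hc : 0 < c := Nat.choose_pos (by omega)
  have hrep : ∃ κ, IsMacaulayRep u (H u % c) κ :=
    exists_isMacaulayRep_of_lt_choose (N := nv + 1 + u)
      (by rw [← Nat.choose_symm_add]; exact Nat.mod_lt _ hc)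
  -- by Pascal's rule each unit of the quotient adds `C(nv+1+u, nv)` to the increment
  have hq : H u / c = 0 := by
    by_contra hq
    have := le_macaulayBound hrep
    have := Nat.div_add_mod (H u) c
    nlinarith [Nat.one_le_iff_ne_zero.mpr hq]
  have hlt' : H u < c := (Nat.div_eq_zero_iff_lt hc).mp hq
  rw [hq, Nat.mod_eq_of_lt hlt', mul_zero, zero_add] at hg
  exact ⟨hlt', hg⟩

end GrowthStep

section MonomialIdeal

theorem _root_.Submodule.finrank_map_of_disjoint_ker {K V W : Type*} [Field K] [AddCommGroup V]
    [Module K V] [AddCommGroup W] [Module K W] {f : V →ₗ[K] W} {p : Submodule K V}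
    (h : Disjoint p (LinearMap.ker f)) : Module.finrank K (p.map f) = Module.finrank K p := by
  have hinj : Function.Injective (f ∘ₗ p.subtype) := fun x y hxy =>
    Subtype.ext (LinearMap.disjoint_ker_iff_injOn.mp h x.2 y.2 hxy)
  rw [← LinearMap.finrank_range_of_inj hinj, LinearMap.range_comp, Submodule.range_subtype]

variable {k : Type*} [Field k] {σ M : Type*} [AddCommMonoid M]

theorem hilb_span_monomial_eq_card (w : σ → M) (A : Set (σ →₀ ℕ)) (b : M)
    (S : Finset (σ →₀ ℕ)) (hS : ∀ u, u ∈ S ↔ Finsupp.weight w u = b ∧ ¬ ∃ a ∈ A, a ≤ u) :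
    hilb k w (Ideal.span ((fun u => monomial u (1 : k)) '' A)) b = S.card := by
  set I := Ideal.span ((fun u => monomial u (1 : k)) '' A)
  set φ := (Ideal.Quotient.mkₐ k I).toLinearMap
  set std := AddMonoidAlgebra.supported k k (S : Set (σ →₀ ℕ))
  have hker : LinearMap.ker φ = I.restrictScalars k := by
    ext p
    simp [φ, Ideal.Quotient.eq_zero_iff_mem]
  have hdisj : Disjoint std (I.restrictScalars k) := by
    rw [Submodule.disjoint_def]
    intro p hpS hpI
    rw [Submodule.restrictScalars_mem, mem_ideal_span_monomial_image] at hpI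
    by_contra hp
    obtain ⟨m, hm⟩ := support_nonempty.mpr hp
    exact ((hS m).mp (hpS hm)).2 (hpI m hm)
  have hW : weightedHomogeneousSubmodule k w b ≤ std ⊔ I.restrictScalars k := by
    rw [weightedHomogeneousSubmodule_eq_finsupp_supported,
      AddMonoidAlgebra.supported_eq_span_single, Submodule.span_le]
    rintro _ ⟨u, hu, rfl⟩
    by_cases h : ∃ a ∈ A, a ≤ u
    · refine Submodule.mem_sup_right (mem_ideal_span_monomial_image.mpr fun v hv => ?_)
      exact Finset.mem_singleton.mp (support_monomial_subset hv) ▸ h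
    · exact Submodule.mem_sup_left ((AddMonoidAlgebra.supported_eq_span_single k _).ge
        (Submodule.subset_span ⟨u, (hS u).mpr ⟨hu, h⟩, rfl⟩))
  have hstd : std ≤ weightedHomogeneousSubmodule k w b := by
    rw [weightedHomogeneousSubmodule_eq_finsupp_supported]
    exact AddMonoidAlgebra.supported_mono fun u hu => ((hS u).mp hu).1
  have himage : (weightedHomogeneousSubmodule k w b).map φ = std.map φ := by
    refine le_antisymm ((Submodule.map_mono hW).trans ?_) (Submodule.map_mono hstd)
    rw [Submodule.map_sup]
    exact sup_le le_rfl ((Submodule.map_le_iff_le_comap.mpr hker.ge).trans bot_le)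
  rw [hilb, himage, Submodule.finrank_map_of_disjoint_ker (hker ▸ hdisj),
    (AddMonoidAlgebra.supportedEquivFinsupp _).finrank_eq, Module.finrank_finsupp_self]
  simp

end MonomialIdeal

theorem span_eq_bot_or_top_of_isWeightedHomogeneous_zero {k σ M : Type*} [Field k]
    [AddCommMonoid M] [PartialOrder M] [CanonicallyOrderedAdd M] [IsAddTorsionFree M]
    {w : σ → M} (hw : ∀ i, w i ≠ 0) {G : Set (MvPolynomial σ k)}
    (hG : ∀ f ∈ G, f.IsWeightedHomogeneous w 0) : Ideal.span G = ⊥ ∨ Ideal.span G = ⊤ := by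
  have hC : C '' (coeff 0 '' G) = G := by
    rw [Set.image_image]
    refine (Set.image_congr fun f hf => ?_).trans (Set.image_id G)
    rw [id, ← weightedHomogeneousComponent_zero f hw, (hG f hf).weightedHomogeneousComponent_same]
  rw [← hC, ← Ideal.map_span]
  rcases Ideal.eq_bot_or_top (Ideal.span (coeff 0 '' G)) with h | h
  · exact Or.inl (by rw [h, Ideal.map_bot])
  · exact Or.inr (by rw [h, Ideal.map_top])

theorem _root_.Finsupp.single_add_single_le_iff {α : Type*} {a b : α} (hab : a ≠ b) {m n : ℕ}
    {u : α →₀ ℕ} : Finsupp.single a m + Finsupp.single b n ≤ u ↔ m ≤ u a ∧ n ≤ u b := by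
  refine ⟨fun h => ⟨by simpa [hab] using h a, by simpa [hab.symm] using h b⟩, ?_⟩
  rintro ⟨ha, hb⟩ i
  rcases eq_or_ne i a with rfl | hia
  · simpa [Finsupp.single_apply, hab.symm] using ha
  rcases eq_or_ne i b with rfl | hib
  · simpa [Finsupp.single_apply, hab] using hb
  simp [hia.symm, hib.symm]

section Example

theorem weight_w18 (u : Fin 2 ⊕ Fin 3 →₀ ℕ) :
    Finsupp.weight w18 u
      = ![u (Sum.inl 0) + u (Sum.inl 1), u (Sum.inr 0) + u (Sum.inr 1) + u (Sum.inr 2)] := by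
  rw [Finsupp.weight_apply, Finsupp.sum_fintype u (fun i c => c • w18 i) fun _ => zero_smul _ _]
  ext t
  fin_cases t <;> simp [w18, Fin.sum_univ_three]

theorem weight_w18_eq_iff {u : Fin 2 ⊕ Fin 3 →₀ ℕ} {d1 d2 : ℕ} :
    Finsupp.weight w18 u = ![d1, d2] ↔
      u (Sum.inl 0) + u (Sum.inl 1) = d1 ∧ u (Sum.inr 0) + u (Sum.inr 1) + u (Sum.inr 2) = d2 := by
  rw [weight_w18, ← List.ofFn_inj]
  simp

def exampleExps : Set (Fin 2 ⊕ Fin 3 →₀ ℕ) :=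
  {Finsupp.single (Sum.inr 0) 2, Finsupp.single (Sum.inl 0) 1 + Finsupp.single (Sum.inr 0) 1,
    Finsupp.single (Sum.inl 0) 1 + Finsupp.single (Sum.inr 1) 3}

theorem exists_exampleExps_le_iff (u : Fin 2 ⊕ Fin 3 →₀ ℕ) :
    (∃ a ∈ exampleExps, a ≤ u) ↔ 2 ≤ u (Sum.inr 0) ∨ (1 ≤ u (Sum.inl 0) ∧ 1 ≤ u (Sum.inr 0))
      ∨ (1 ≤ u (Sum.inl 0) ∧ 3 ≤ u (Sum.inr 1)) := by
  simp only [exampleExps, Set.mem_insert_iff, Set.mem_singleton_iff, exists_eq_or_imp,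
    exists_eq_left, Finsupp.single_le_iff, Finsupp.single_add_single_le_iff Sum.inl_ne_inr]

def stdTriples (d1 d2 : ℕ) : Finset (ℕ × ℕ × ℕ) :=
  {0} ×ˢ ({0} ×ˢ Finset.range (d2 + 1) ∪ {1} ×ˢ Finset.range d2)
    ∪ Finset.Icc 1 d1 ×ˢ {0} ×ˢ Finset.range (min 3 (d2 + 1))

theorem mem_stdTriples {d1 d2 : ℕ} {t : ℕ × ℕ × ℕ} :
    t ∈ stdTriples d1 d2 ↔ t.1 ≤ d1 ∧ t.2.1 + t.2.2 ≤ d2 ∧ t.2.1 ≤ 1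
      ∧ (t.1 = 0 ∨ t.2.1 = 0) ∧ (t.1 = 0 ∨ t.2.2 ≤ 2) := by
  obtain ⟨a, b, c⟩ := t
  simp [stdTriples]
  omega

theorem card_stdTriples (d1 d2 : ℕ) :
    (stdTriples d1 d2).card = 2 * d2 + 1 + d1 * min 3 (d2 + 1) := by
  rw [stdTriples, Finset.card_union_of_disjoint, Finset.card_product, Finset.card_product,
    Finset.card_product, Finset.card_union_of_disjoint]
  · simp; ring
  · rw [Finset.disjoint_left]
    rintro ⟨b, c⟩ h1 h2
    simp at h1 h2
    omega
  · rw [Finset.disjoint_left]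
    rintro ⟨a, b, c⟩ h1 h2
    simp at h1 h2
    omega

noncomputable def expVec (d1 d2 : ℕ) (t : ℕ × ℕ × ℕ) : Fin 2 ⊕ Fin 3 →₀ ℕ :=
  Finsupp.equivFunOnFinite.symm (Sum.elim ![t.1, d1 - t.1] ![t.2.1, t.2.2, d2 - (t.2.1 + t.2.2)])

theorem mem_image_expVec_iff {d1 d2 : ℕ} {u : Fin 2 ⊕ Fin 3 →₀ ℕ} :
    u ∈ (stdTriples d1 d2).image (expVec d1 d2) ↔
      Finsupp.weight w18 u = ![d1, d2] ∧ ¬ ∃ a ∈ exampleExps, a ≤ u := by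
  rw [weight_w18_eq_iff, exists_exampleExps_le_iff, Finset.mem_image]
  constructor
  · rintro ⟨t, ht, rfl⟩
    rw [mem_stdTriples] at ht
    simp [expVec]
    omega
  · rintro ⟨⟨hx, hy⟩, hstd⟩
    refine ⟨(u (Sum.inl 0), u (Sum.inr 0), u (Sum.inr 1)),
      mem_stdTriples.mpr (by dsimp only; omega), ?_⟩
    ext (i | j)
    · fin_cases i <;> simp [expVec]
      omega
    · fin_cases j <;> simp [expVec]
      omega

theorem injOn_expVec (d1 d2 : ℕ) : Set.InjOn (expVec d1 d2) (stdTriples d1 d2) := by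
  intro s _ t _ h
  simpa [expVec] using congr_arg (fun u => (u (Sum.inl 0), u (Sum.inr 0), u (Sum.inr 1))) h

def exampleHilb (d1 d2 : ℕ) : ℕ := 2 * d2 + 1 + d1 * min 3 (d2 + 1)

variable (k : Type*) [Field k]

noncomputable def exampleIdeal : Ideal (MvPolynomial (Fin 2 ⊕ Fin 3) k) :=
  Ideal.span {X (Sum.inr 0) ^ 2, X (Sum.inl 0) * X (Sum.inr 0), X (Sum.inl 0) * X (Sum.inr 1) ^ 3}

theorem exampleIdeal_eq_span_monomial :
    exampleIdeal k = Ideal.span ((fun u => monomial u (1 : k)) '' exampleExps) := by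
  simp only [exampleIdeal, exampleExps, Set.image_insert_eq, Set.image_singleton, X, monomial_mul,
    monomial_pow, one_pow, Finsupp.smul_single, smul_eq_mul, mul_one]

theorem hilb_exampleIdeal (d1 d2 : ℕ) :
    hilb k w18 (exampleIdeal k) ![d1, d2] = exampleHilb d1 d2 := by
  rw [exampleIdeal_eq_span_monomial, hilb_span_monomial_eq_card w18 _ _ _
    fun _ => mem_image_expVec_iff, Finset.card_image_of_injOn (injOn_expVec d1 d2),
    card_stdTriples, exampleHilb]

theorem isHilbPoly_exampleIdeal :
    IsHilbPoly k w18 (exampleIdeal k) (3 * X 0 + 2 * X 1 + 1) := by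
  refine ⟨2, fun b hb => ?_⟩
  obtain ⟨b0, b1, rfl⟩ : ∃ b0 b1, b = ![b0, b1] := ⟨b 0, b 1, by ext i; fin_cases i <;> rfl⟩
  rw [hilb_exampleIdeal, exampleHilb, show min 3 (b1 + 1) = 3 by have := hb 1; simp at this; omega]
  simp
  ring

theorem exampleIdeal_ne_bot : exampleIdeal k ≠ ⊥ := by
  intro h
  have hy : (X (Sum.inr 0) ^ 2 : MvPolynomial (Fin 2 ⊕ Fin 3) k) ∈ exampleIdeal k :=
    Ideal.subset_span (by simp)
  rw [h, Ideal.mem_bot] at hy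
  exact pow_ne_zero 2 (X_ne_zero _) hy

theorem exampleIdeal_ne_top : exampleIdeal k ≠ ⊤ := by
  rw [Ne, Ideal.eq_top_iff_one, exampleIdeal_eq_span_monomial]
  intro h
  simpa using (exists_exampleExps_le_iff 0).mp (mem_ideal_span_monomial_image.mp h 0 (by simp))

theorem not_genInDegLE_exampleIdeal_zero : ¬ GenInDegLE w18 (exampleIdeal k) ![0, 0] := by
  rintro ⟨G, hspan, hdeg⟩
  have hG : ∀ f ∈ G, f.IsWeightedHomogeneous w18 0 := by
    intro f hf
    obtain ⟨d, hd, hle⟩ := hdeg f hf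
    obtain rfl : d = 0 :=
      funext fun i => Nat.le_zero.mp ((hle i).trans_eq (by fin_cases i <;> rfl))
    exact hd
  have hw : ∀ i, w18 i ≠ 0 := by
    rintro (i | i) <;> simp [w18, ← List.ofFn_inj]
  rcases span_eq_bot_or_top_of_isWeightedHomogeneous_zero hw hG with h | h <;> rw [← hspan] at h
  exacts [exampleIdeal_ne_bot k h, exampleIdeal_ne_top k h]

end Example

section ExampleGrowth

variable {d1 d2 : ℕ}

theorem le_of_growthStep_exampleHilb_fst (hd2 : 2 ≤ d2) (h : growthStep 1 (exampleHilb · d2) d1) :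
    2 * d2 ≤ d1 + 2 := by
  rw [growthStep_one_iff] at h
  simp only [exampleHilb, show min 3 (d2 + 1) = 3 by omega] at h
  have hdiv : (2 * d2 + 1 + d1 * 3) / (d1 + 1) < 4 := by omega
  rw [Nat.div_lt_iff_lt_mul (by omega)] at hdiv
  omega

theorem le_of_growthStep_exampleHilb_snd (hd2 : 2 ≤ d2) (h : growthStep 2 (exampleHilb d1 ·) d2) :
    3 * d1 + 1 ≤ d2 := by
  have hmin : ∀ n, 2 ≤ n → min 3 (n + 1) = 3 := fun n hn => by omega
  obtain ⟨hlt, hmac⟩ := growthStep_succ_of_lt (nv := 1) h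
    (by simp only [exampleHilb, hmin d2 hd2, hmin (d2 + 1) (by omega), Nat.choose_one_right]; omega)
  simp only [exampleHilb, hmin d2 hd2, hmin (d2 + 1) (by omega)] at hlt hmac
  have := le_mul_of_macaulayBound_le (e := 2)
    (exists_isMacaulayRep_of_lt_choose (hlt.trans_eq Nat.choose_symm_add)) (by omega)
  omega

theorem not_growthStep_exampleHilb_snd_one : ¬ growthStep 2 (exampleHilb d1 ·) 1 := by
  intro hg
  rw [growthStep_at_one_iff] at hg
  norm_num [exampleHilb, show Nat.choose 4 2 = 6 from rfl] at hg
  have := Nat.div_add_mod (d1 * 2) 3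
  have : d1 * 2 % 3 < 3 := Nat.mod_lt _ (by norm_num)
  interval_cases hr : d1 * 2 % 3 <;> norm_num at hg <;> omega

theorem eq_zero_of_growthStep_exampleHilb_snd_zero (h : growthStep 2 (exampleHilb d1 ·) 0) :
    d1 = 0 := by
  rw [growthStep_zero_iff] at h
  simp [exampleHilb] at h
  omega

end ExampleGrowth

/-- **Example 3.18.** For `I = (y₀², x₀y₀, x₀y₁³) ⊆ Cox(P¹ × P²)`, with Hilbert polynomial
`3t₁ + 2t₂ + 1`, there is no `(d₁,d₂) ∈ ℕ²` with `I` generated in degrees `≤ (d₁,d₂)` such that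
the Hilbert function displays maximal growth in both the `(1,0)` and the `(0,1)` direction at
`(d₁,d₂)` simultaneously. -/
theorem no_simultaneous_maximal_growth {k : Type*} [Field k] :
    let x : Fin 2 → MvPolynomial (Fin 2 ⊕ Fin 3) k := fun i => X (Sum.inl i)
    let y : Fin 3 → MvPolynomial (Fin 2 ⊕ Fin 3) k := fun j => X (Sum.inr j)
    let I : Ideal (MvPolynomial (Fin 2 ⊕ Fin 3) k) :=
      Ideal.span {y 0 ^ 2, x 0 * y 0, x 0 * y 1 ^ 3}
    IsHilbPoly k w18 I (3 * X 0 + 2 * X 1 + 1) ∧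
    ¬ ∃ d1 d2 : ℕ, GenInDegLE w18 I ![d1, d2] ∧
        growthStep 1 (fun u => hilb k w18 I ![u, d2]) d1 ∧
        growthStep 2 (fun u => hilb k w18 I ![d1, u]) d2 := by
  intro x y I
  rw [show I = exampleIdeal k from rfl]
  refine ⟨isHilbPoly_exampleIdeal k, ?_⟩
  rintro ⟨d1, d2, hgen, hgrowth₁, hgrowth₂⟩
  simp only [hilb_exampleIdeal] at hgrowth₁ hgrowth₂
  obtain rfl | rfl | hd2 : d2 = 0 ∨ d2 = 1 ∨ 2 ≤ d2 := by omega
  · obtain rfl := eq_zero_of_growthStep_exampleHilb_snd_zero hgrowth₂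
    exact not_genInDegLE_exampleIdeal_zero k hgen
  · exact not_growthStep_exampleHilb_snd_one hgrowth₂
  · have := le_of_growthStep_exampleHilb_fst hd2 hgrowth₁
    have := le_of_growthStep_exampleHilb_snd hd2 hgrowth₂
    omega

end Gotzmann
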